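/- arXiv:1910.10097 — 5 statements merged into one kernel-verified Lean document; each statement's English description precedes it below -/
import Mathlib

section
/- With the notation of the B–N partition: if x* is any feasible point of {A x = b, x ≥ 0}, x^k is the basic feasible solution associated with basis B^k (so x^k_{N^k} = 0), c̄_{N^k} is the reduced cost vector at B^k, and γ_D^k = max{ -c̄_j : j ∈ N^k, c̄_j < 0 } (taken as the supremum of the negative parts of c̄), then c^T x^k - c^T x* ≤ γ_D^k * ‖x*_{N^k}‖_1. -/
open Matrix Finset

/-!
Put `y = c_Bᵀ A_B⁻¹` (the simplex multipliers), so that `c̄ = c - Aᵀ y`. For every `x` with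
`A x = b` we have `c̄ᵀ x = cᵀ x - yᵀ b`, hence the gap `cᵀ x^k - cᵀ x*` equals `c̄ᵀ (x^k - x*)`.
Since `c̄` vanishes on the basis and `x^k` vanishes off it, this is `-∑_{j ∈ N} c̄_j x*_j`, and
each term is at most `γ_D x*_j` because `x* ≥ 0`.
-/

section ReducedCost

variable {R : Type*} [CommRing R] {m n : Type*} [Fintype m]

theorem sub_vecMul_dotProduct_of_mulVec_eq [Fintype n] (A : Matrix m n R) {b : m → R}
    {x : n → R} (hx : A *ᵥ x = b) (c : n → R) (y : m → R) :
    (c - y ᵥ* A) ⬝ᵥ x = c ⬝ᵥ x - y ⬝ᵥ b := by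
  rw [sub_dotProduct, ← dotProduct_mulVec, hx]

theorem dotProduct_sub_eq_sub_vecMul_dotProduct_sub [Fintype n] (A : Matrix m n R)
    {x x' : n → R} (hx : A *ᵥ x = A *ᵥ x') (c : n → R) (y : m → R) :
    c ⬝ᵥ x - c ⬝ᵥ x' = (c - y ᵥ* A) ⬝ᵥ (x - x') := by
  rw [dotProduct_sub, sub_vecMul_dotProduct_of_mulVec_eq A hx,
    sub_vecMul_dotProduct_of_mulVec_eq A rfl]
  ring

theorem sub_vecMul_comp_eq_zero [DecidableEq m] (A : Matrix m n R) (B : m → n)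
    (hB : IsUnit (A.submatrix id B).det) (c : n → R) :
    (c - (c ∘ B) ᵥ* (A.submatrix id B)⁻¹ ᵥ* A) ∘ B = 0 := by
  have hsub : ∀ v : m → R, (v ᵥ* A) ∘ B = v ᵥ* A.submatrix id B := fun v => by
    ext k; rfl
  rw [Pi.sub_comp, hsub, vecMul_vecMul, nonsing_inv_mul _ hB, vecMul_one, sub_self]

end ReducedCost

theorem neg_mul_le_mul_of_neg_le {r x γ : ℝ} (hx : 0 ≤ x) (hγ : 0 ≤ γ)
    (hr : r < 0 → -r ≤ γ) : -(r * x) ≤ γ * x := by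
  rcases lt_or_ge r 0 with hneg | hnonneg
  · nlinarith [hr hneg]
  · nlinarith

theorem kitahara_mizuno_gap_bound_general (m n : ℕ) (A : Matrix (Fin m) (Fin n) ℝ)
    (b : Fin m → ℝ) (c : Fin n → ℝ) (Bf : Fin m → Fin n)
    (AB : Matrix (Fin m) (Fin m) ℝ) (hABdef : AB = fun i k => A i (Bf k))
    (hAB : IsUnit AB.det)
    (xs : Fin n → ℝ) (hxsfeas : A.mulVec xs = b) (hxsnn : ∀ j, 0 ≤ xs j)
    (xk : Fin n → ℝ) (hxkfeas : A.mulVec xk = b)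
    (hxkbasic : ∀ j ∈ (Finset.image Bf Finset.univ)ᶜ, xk j = 0)
    (cbar : Fin n → ℝ)
    (hcbar : ∀ j, cbar j = c j - (fun i => c (Bf i)) ⬝ᵥ AB⁻¹.mulVec (fun i => A i j))
    (γD : ℝ) (hγD0 : 0 ≤ γD)
    (hγD : ∀ j ∈ (Finset.image Bf Finset.univ)ᶜ, cbar j < 0 → -cbar j ≤ γD) :
    c ⬝ᵥ xk - c ⬝ᵥ xs ≤ γD * ∑ j ∈ (Finset.image Bf Finset.univ)ᶜ, |xs j| := by
  subst hABdef
  have hcbar_eq : cbar = c - (c ∘ Bf) ᵥ* (A.submatrix id Bf)⁻¹ ᵥ* A := by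
    ext j
    rw [hcbar, dotProduct_mulVec]
    rfl
  have hbasic : ∀ j ∈ image Bf univ, cbar j * (xk - xs) j = 0 := by
    simp only [Finset.mem_image, Finset.mem_univ, true_and, forall_exists_index]
    rintro _ k rfl
    rw [show cbar (Bf k) = 0 from congrFun (hcbar_eq ▸ sub_vecMul_comp_eq_zero A Bf hAB c) k,
      zero_mul]
  rw [dotProduct_sub_eq_sub_vecMul_dotProduct_sub A (hxkfeas.trans hxsfeas.symm) c, ← hcbar_eq,
    dotProduct, ← sum_add_sum_compl (image Bf univ), sum_eq_zero hbasic, zero_add, mul_sum]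
  refine sum_le_sum fun j hj => ?_
  rw [Pi.sub_apply, hxkbasic j hj, zero_sub, mul_neg, abs_of_nonneg (hxsnn j)]
  exact neg_mul_le_mul_of_neg_le (hxsnn j) hγD0 (hγD j hj)

/-- Lemma 3.1 (Kitahara–Mizuno): the optimality gap of the basic feasible solution `xk`
relative to any feasible `xs` is bounded by `γD` times the ℓ1 norm of the
nonbasic part of `xs`. -/
theorem kitahara_mizuno_gap_bound (m n : ℕ) (A : Matrix (Fin m) (Fin n) ℝ)
    (b : Fin m → ℝ) (c : Fin n → ℝ) (Bf : Fin m → Fin n) (hBf : Function.Injective Bf)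
    (AB : Matrix (Fin m) (Fin m) ℝ) (hABdef : AB = fun i k => A i (Bf k))
    (hAB : IsUnit AB.det)
    (xs : Fin n → ℝ) (hxsfeas : A.mulVec xs = b) (hxsnn : ∀ j, 0 ≤ xs j)
    (xk : Fin n → ℝ) (hxkfeas : A.mulVec xk = b) (hxknn : ∀ j, 0 ≤ xk j)
    (hxkbasic : ∀ j ∈ (Finset.image Bf Finset.univ)ᶜ, xk j = 0)
    (cbar : Fin n → ℝ)
    (hcbar : ∀ j, cbar j = c j - (fun i => c (Bf i)) ⬝ᵥ AB⁻¹.mulVec (fun i => A i j))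
    (γD : ℝ) (hγD0 : 0 ≤ γD)
    (hγD : ∀ j ∈ (Finset.image Bf Finset.univ)ᶜ, cbar j < 0 → -cbar j ≤ γD) :
    c ⬝ᵥ xk - c ⬝ᵥ xs ≤ γD * ∑ j ∈ (Finset.image Bf Finset.univ)ᶜ, |xs j| :=
  kitahara_mizuno_gap_bound_general m n A b c Bf AB hABdef hAB xs hxsfeas hxsnn xk hxkfeas hxkbasic
    cbar hcbar γD hγD0 hγD
end

section
/- For the linear program: minimize -Σ_{i=1}^m x_i subject to x_1 ≤ 1, 2 Σ_{i=1}^{k-1} x_i + x_k ≤ 2^k - 1 for k = 2,…,m, and x ≥ 0, the point x* = (0, …, 0, 2^m - 1) is an optimal solution with optimal objective value -(2^m - 1). -/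
open Finset

lemma km_aux (n : ℕ) (x : Fin (n+1) → ℝ) :
    ∑ i, x i = ∑ i ∈ Finset.Iio (Fin.last n), x i + x (Fin.last n) := by
  have h : (Finset.univ : Finset (Fin (n+1))) = insert (Fin.last n) (Finset.Iio (Fin.last n)) := by
    ext i
    simp only [Finset.mem_insert, Finset.mem_Iio, Finset.mem_univ, true_iff]
    rcases eq_or_ne i (Fin.last n) with h | h
    · exact Or.inl h
    · exact Or.inr (Fin.lt_last_iff_ne_last.mpr h)
  rw [h, Finset.sum_insert (fun hmem => lt_irrefl _ (Finset.mem_Iio.mp hmem))]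
  ring

/-- The Kitahara–Mizuno Klee–Minty variant: `x* = (0, …, 0, 2^m - 1)` is feasible and
optimal for `min -∑ x_i` subject to `2 ∑_{i<k} x_i + x_k ≤ 2^k - 1` and `x ≥ 0`. -/
theorem klee_minty_km_optimal (m : ℕ) (hm : 0 < m)
    (xstar : Fin m → ℝ)
    (hxstar : ∀ i : Fin m, xstar i = if (i : ℕ) = m - 1 then 2 ^ m - 1 else 0) :
    ((∀ i, 0 ≤ xstar i) ∧
      (∀ k : Fin m, 2 * ∑ i ∈ Finset.Iio k, xstar i + xstar k ≤ 2 ^ ((k : ℕ) + 1) - 1)) ∧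
    (-∑ i, xstar i = -(2 ^ m - 1)) ∧
    (∀ x : Fin m → ℝ, (∀ i, 0 ≤ x i) →
      (∀ k : Fin m, 2 * ∑ i ∈ Finset.Iio k, x i + x k ≤ 2 ^ ((k : ℕ) + 1) - 1) →
      -∑ i, x i ≥ -((2 : ℝ) ^ m - 1)) := by
  obtain ⟨n, rfl⟩ := Nat.exists_eq_succ_of_ne_zero hm.ne'
  simp only [Nat.succ_eq_add_one] at hxstar ⊢
  have hpow : (1 : ℝ) ≤ 2 ^ (n + 1) := one_le_pow₀ (by norm_num)
  have hzero : ∀ i : Fin (n+1), (i : ℕ) ≠ n → xstar i = 0 := fun i hi => by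
    rw [hxstar i]; simp [hi]
  have hsumIio : ∀ k : Fin (n+1), ∑ i ∈ Finset.Iio k, xstar i = 0 := by
    intro k
    apply Finset.sum_eq_zero
    intro i hi
    apply hzero
    have : i < k := Finset.mem_Iio.mp hi
    have h2 : (i : ℕ) < (k : ℕ) := this
    have h3 := k.isLt
    omega
  refine ⟨⟨?_, ?_⟩, ?_, ?_⟩
  · intro i
    rw [hxstar i]
    split
    · linarith
    · exact le_refl _
  · intro k
    rw [hsumIio k, hxstar k]
    split
    · rename_i h
      have : (k : ℕ) + 1 = n + 1 := by omega
      rw [this]; linarith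
    · have : (1:ℝ) ≤ 2 ^ ((k:ℕ)+1) := one_le_pow₀ (by norm_num)
      linarith
  · rw [km_aux n xstar, hsumIio, hxstar]
    simp
  · intro x hx hcon
    have hk := hcon (Fin.last n)
    have hIio : 0 ≤ ∑ i ∈ Finset.Iio (Fin.last n), x i :=
      Finset.sum_nonneg fun i _ => hx i
    rw [km_aux n x]
    simp only [Fin.val_last] at hk
    linarith
end

section
/- For the linear program: minimize -Σ_{i=1}^m 2^{m-i} x_i subject to the lower-triangular constraints x_1 ≤ 5, and 2^k x_1 + 2^{k-1} x_2 + … + 2^2 x_{k-1} + x_k ≤ 5^k for k = 2,…,m (with coefficient 2^{k-j+1} on x_j for j < k and 1 on x_k), and x ≥ 0, the point x* = (0,…,0, 5^m) is optimal with objective value -5^m. -/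
open Finset

/-- The Greenberg Klee–Minty variant (4.1): `x* = (0, …, 0, 5^m)` is feasible and optimal
for `min -∑ 2^{m-i} x_i` subject to `∑_{j<k} 2^{k-j+1} x_j + x_k ≤ 5^k` and `x ≥ 0`
(indices written here 0-based). -/
theorem klee_minty_greenberg_optimal (m : ℕ) (hm : 0 < m)
    (xstar : Fin m → ℝ)
    (hxstar : ∀ i : Fin m, xstar i = if (i : ℕ) = m - 1 then 5 ^ m else 0) :
    ((∀ i, 0 ≤ xstar i) ∧
      (∀ k : Fin m, ∑ j ∈ Finset.Iio k, 2 ^ ((k : ℕ) - (j : ℕ) + 1) * xstar j + xstar k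
        ≤ 5 ^ ((k : ℕ) + 1))) ∧
    (-∑ i : Fin m, (2 : ℝ) ^ (m - 1 - (i : ℕ)) * xstar i = -(5 : ℝ) ^ m) ∧
    (∀ x : Fin m → ℝ, (∀ i, 0 ≤ x i) →
      (∀ k : Fin m, ∑ j ∈ Finset.Iio k, 2 ^ ((k : ℕ) - (j : ℕ) + 1) * x j + x k
        ≤ 5 ^ ((k : ℕ) + 1)) →
      ∑ i : Fin m, (2 : ℝ) ^ (m - 1 - (i : ℕ)) * x i ≤ (5 : ℝ) ^ m) := by
  set last : Fin m := ⟨m - 1, by omega⟩ with hlast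
  have huniv : (Finset.univ : Finset (Fin m)) = insert last (Finset.Iio last) := by
    ext i
    simp only [Finset.mem_univ, Finset.mem_insert, Finset.mem_Iio, true_iff]
    rcases eq_or_ne i last with h | h
    · exact Or.inl h
    · right
      have : (i : ℕ) ≠ m - 1 := fun hc => h (Fin.ext hc)
      have := i.isLt
      exact Fin.lt_def.mpr (by simp only [hlast]; omega)
  have hlnot : last ∉ Finset.Iio last := by simp
  refine ⟨⟨?_, ?_⟩, ?_, ?_⟩
  · intro i
    rw [hxstar i]
    split <;> positivity
  · intro k
    have hsum0 : ∑ j ∈ Finset.Iio k, 2 ^ ((k : ℕ) - (j : ℕ) + 1) * xstar j = 0 := by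
      apply Finset.sum_eq_zero
      intro j hj
      have hjk : j < k := Finset.mem_Iio.mp hj
      have : (j : ℕ) ≠ m - 1 := by
        have := k.isLt
        have := Fin.lt_def.mp hjk
        omega
      rw [hxstar j, if_neg this, mul_zero]
    rw [hsum0, zero_add, hxstar k]
    split
    · next h =>
      have : (k : ℕ) + 1 = m := by have := k.isLt; omega
      rw [this]
    · positivity
  · have : ∑ i : Fin m, (2 : ℝ) ^ (m - 1 - (i : ℕ)) * xstar i = 5 ^ m := by
      rw [huniv, Finset.sum_insert hlnot]
      have h1 : ∑ j ∈ Finset.Iio last, (2 : ℝ) ^ (m - 1 - (j : ℕ)) * xstar j = 0 := by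
        apply Finset.sum_eq_zero
        intro j hj
        have hjk := Fin.lt_def.mp (Finset.mem_Iio.mp hj)
        have : (j : ℕ) ≠ m - 1 := by simp only [hlast] at hjk; omega
        rw [hxstar j, if_neg this, mul_zero]
      rw [h1, add_zero, hxstar last, if_pos rfl]
      simp [hlast]
    rw [this]
  · intro x hx0 hxc
    have hc := hxc last
    have hlv : (last : ℕ) = m - 1 := rfl
    calc ∑ i : Fin m, (2 : ℝ) ^ (m - 1 - (i : ℕ)) * x i
        = (2 : ℝ) ^ (m - 1 - (last : ℕ)) * x last
            + ∑ j ∈ Finset.Iio last, (2 : ℝ) ^ (m - 1 - (j : ℕ)) * x j := by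
          rw [huniv, Finset.sum_insert hlnot]
      _ ≤ x last + ∑ j ∈ Finset.Iio last, (2 : ℝ) ^ ((last : ℕ) - (j : ℕ) + 1) * x j := by
          gcongr with j hj
          · rw [hlv, Nat.sub_self, pow_zero, one_mul]
          · exact hx0 _
          · exact one_le_two
          · omega
      _ = ∑ j ∈ Finset.Iio last, (2 : ℝ) ^ ((last : ℕ) - (j : ℕ) + 1) * x j + x last := by ring
      _ ≤ 5 ^ ((last : ℕ) + 1) := hc
      _ = 5 ^ m := by rw [hlv]; congr 1; omega
end

section
/- For the linear program: minimize -Σ_{i=1}^m 10^{m-i} x_i subject to 2 Σ_{j=1}^{i-1} 10^{i-j} x_j + x_i ≤ 100^{i-1} for i = 1,…,m and x ≥ 0, the point x* = (0,…,0, 100^{m-1}) is optimal with objective value -100^{m-1}. -/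
open Finset

/-!
Only the last constraint matters: since `x ≥ 0`, the objective
`∑_{j<m} 10^{m-j} x_j + x_m` is at most `2 ∑_{j<m} 10^{m-j} x_j + x_m ≤ 100^{m-1}`.
The point `x* = 100^{m-1} e_m` meets this bound with equality, and it satisfies every earlier
constraint because its first `m - 1` coordinates vanish.
-/

namespace KleeMinty

variable {m : ℕ}

def constraintLHS (x : Fin m → ℝ) (i : Fin m) : ℝ :=
  2 * ∑ j ∈ Iio i, 10 ^ ((i : ℕ) - (j : ℕ)) * x j + x i

def objective (x : Fin m → ℝ) : ℝ :=
  ∑ i : Fin m, 10 ^ (m - 1 - (i : ℕ)) * x i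

theorem constraintLHS_single_of_le {i k : Fin m} (h : i ≤ k) (c : ℝ) :
    constraintLHS (Pi.single k c) i = (Pi.single k c : Fin m → ℝ) i := by
  have hsum :
      ∑ j ∈ Iio i, (10 : ℝ) ^ ((i : ℕ) - (j : ℕ)) * (Pi.single k c : Fin m → ℝ) j = 0 :=
    sum_eq_zero fun j hj => by
      rw [Pi.single_eq_of_ne ((mem_Iio.mp hj).trans_le h).ne, mul_zero]
  rw [constraintLHS, hsum, mul_zero, zero_add]

theorem objective_single (k : Fin m) (c : ℝ) :
    objective (Pi.single k c) = 10 ^ (m - 1 - (k : ℕ)) * c := by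
  simp [objective, Pi.single_apply]

theorem objective_le_constraintLHS_last {n : ℕ} {x : Fin (n + 1) → ℝ} (hx : ∀ i, 0 ≤ x i) :
    objective x ≤ constraintLHS x (Fin.last n) := by
  set S := ∑ j ∈ Iio (Fin.last n), (10 : ℝ) ^ (n - (j : ℕ)) * x j
  have hS : 0 ≤ S := sum_nonneg fun j _ => mul_nonneg (by positivity) (hx j)
  have hobj : objective x = S + x (Fin.last n) := by
    rw [objective, ← Iic_top, Fin.top_eq_last, ← sum_Iio_add_eq_sum_Iic]
    simp [S]
  simp only [hobj, constraintLHS, Fin.val_last]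
  linarith

end KleeMinty

/-- The second Klee–Minty variant (4.2): `x* = (0, …, 0, 100^{m-1})` is feasible and
optimal for `min -∑ 10^{m-i} x_i` subject to
`2 ∑_{j<i} 10^{i-j} x_j + x_i ≤ 100^{i-1}` and `x ≥ 0` (indices written here 0-based). -/
theorem klee_minty_variant2_optimal (m : ℕ) (hm : 0 < m)
    (xstar : Fin m → ℝ)
    (hxstar : ∀ i : Fin m, xstar i = if (i : ℕ) = m - 1 then 100 ^ (m - 1) else 0) :
    ((∀ i, 0 ≤ xstar i) ∧
      (∀ i : Fin m, 2 * ∑ j ∈ Finset.Iio i, 10 ^ ((i : ℕ) - (j : ℕ)) * xstar j + xstar i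
        ≤ 100 ^ (i : ℕ))) ∧
    (-∑ i : Fin m, (10 : ℝ) ^ (m - 1 - (i : ℕ)) * xstar i = -(100 : ℝ) ^ (m - 1)) ∧
    (∀ x : Fin m → ℝ, (∀ i, 0 ≤ x i) →
      (∀ i : Fin m, 2 * ∑ j ∈ Finset.Iio i, 10 ^ ((i : ℕ) - (j : ℕ)) * x j + x i
        ≤ 100 ^ (i : ℕ)) →
      ∑ i : Fin m, (10 : ℝ) ^ (m - 1 - (i : ℕ)) * x i ≤ (100 : ℝ) ^ (m - 1)) := by
  obtain ⟨n, rfl⟩ := Nat.exists_eq_add_one_of_ne_zero hm.ne'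
  obtain rfl : xstar = Pi.single (Fin.last n) ((100 : ℝ) ^ n) := by
    ext i
    simp [hxstar, Pi.single_apply, Fin.ext_iff]
  refine ⟨⟨fun i => ?_, fun i => ?_⟩, ?_, fun x hx hfeas => ?_⟩
  · exact (Pi.single_nonneg (α := fun _ => ℝ)).mpr (by positivity) i
  · change KleeMinty.constraintLHS _ i ≤ _
    rw [KleeMinty.constraintLHS_single_of_le (Fin.le_last i), Pi.single_apply]
    split_ifs with h
    · rw [h, Fin.val_last]
    · positivity
  · change -KleeMinty.objective _ = _
    simp [KleeMinty.objective_single]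
  · exact (KleeMinty.objective_le_constraintLHS_last hx).trans (hfeas (Fin.last n))
end

section
/- Suppose a sequence of nonnegative gaps (G_k) satisfies G_{k+1} ≤ (1 - ρ) G_k with 0 < ρ < 1, and at stage k there is a coordinate j̄ and positive reals δ ≤ x_{j̄}^k ≤ γ with s_{j̄}* ≥ G_k/(m γ) and x_{j̄}^{k+t} ≤ G_{k+t}/s_{j̄}* for all t ≥ 0. Then x_{j̄}^{k+t} ≤ m γ (1-ρ)^t, and in particular if ρ = δ/(mγ) and t ≥ (mγ/δ) log(mγ/δ) with mγ/δ ≥ 1, then x_{j̄}^{k+t} ≤ δ. -/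
/-- Combining (3.12)–(3.16): the coordinate `x_{j̄}` decays geometrically with the gap,
and after `t ≥ (mγ/δ) log(mγ/δ)` iterations it is at most `δ`. -/
theorem coordinate_decay (m : ℕ) (hm : 0 < m) (δ γ ρ : ℝ) (hδ : 0 < δ) (hγ : 0 < γ)
    (hδγ : δ ≤ γ) (hρ0 : 0 < ρ) (hρ1 : ρ < 1)
    (G : ℕ → ℝ) (hGnn : ∀ k, 0 ≤ G k) (hGdec : ∀ k, G (k + 1) ≤ (1 - ρ) * G k)
    (k : ℕ) (s : ℝ) (hs : 0 < s) (hslb : s ≥ G k / (m * γ))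
    (x : ℕ → ℝ) (hxk1 : δ ≤ x k) (hxk2 : x k ≤ γ)
    (hxub : ∀ t : ℕ, x (k + t) ≤ G (k + t) / s) :
    (∀ t : ℕ, x (k + t) ≤ m * γ * (1 - ρ) ^ t) ∧
      (ρ = δ / (m * γ) → 1 ≤ m * γ / δ →
        ∀ t : ℕ, (m * γ / δ) * Real.log (m * γ / δ) ≤ t → x (k + t) ≤ δ) := by
  have hmγ : (0:ℝ) < m * γ := by positivity
  have h1ρ : (0:ℝ) ≤ 1 - ρ := by linarith
  have hGk : G k / s ≤ m * γ := by
    rw [div_le_iff₀ hs]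
    have : G k ≤ s * (m * γ) := by
      have := (div_le_iff₀ hmγ).mp hslb
      linarith
    linarith
  have hGt : ∀ t : ℕ, G (k + t) ≤ (1 - ρ) ^ t * G k := by
    intro t
    induction t with
    | zero => simp
    | succ n ih =>
      have h1 := hGdec (k + n)
      have h2 : (1 - ρ) * G (k + n) ≤ (1 - ρ) * ((1 - ρ) ^ n * G k) :=
        mul_le_mul_of_nonneg_left ih h1ρ
      calc G (k + (n + 1)) = G (k + n + 1) := by ring_nf
        _ ≤ (1 - ρ) * G (k + n) := h1
        _ ≤ (1 - ρ) * ((1 - ρ) ^ n * G k) := h2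
        _ = (1 - ρ) ^ (n + 1) * G k := by ring
  have main : ∀ t : ℕ, x (k + t) ≤ m * γ * (1 - ρ) ^ t := by
    intro t
    have h1 := hxub t
    have h2 : G (k + t) / s ≤ (1 - ρ) ^ t * (G k / s) := by
      rw [div_le_iff₀ hs]
      have := hGt t
      calc G (k + t) ≤ (1 - ρ) ^ t * G k := this
        _ = (1 - ρ) ^ t * (G k / s) * s := by field_simp
    have h3 : (1 - ρ) ^ t * (G k / s) ≤ (1 - ρ) ^ t * (m * γ) :=
      mul_le_mul_of_nonneg_left hGk (pow_nonneg h1ρ t)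
    calc x (k + t) ≤ G (k + t) / s := h1
      _ ≤ (1 - ρ) ^ t * (G k / s) := h2
      _ ≤ (1 - ρ) ^ t * (m * γ) := h3
      _ = m * γ * (1 - ρ) ^ t := by ring
  refine ⟨main, ?_⟩
  intro hρeq ha t ht
  set a : ℝ := m * γ / δ with hadef
  have ha0 : 0 < a := by positivity
  have hρinv : ρ = 1 / a := by
    rw [hρeq, hadef]; field_simp
  have hloga : 0 ≤ Real.log a := Real.log_nonneg ha
  -- (1-ρ)^t ≤ exp(-ρ t)
  have hlog : Real.log (1 - ρ) ≤ -ρ := by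
    rcases eq_or_lt_of_le h1ρ with h | h
    · rw [← h, Real.log_zero]; linarith
    · have := Real.log_le_sub_one_of_pos h
      linarith
  have h1ρ' : (0:ℝ) < 1 - ρ := by linarith
  have hpow : (1 - ρ) ^ t ≤ Real.exp (-(ρ * t)) := by
    have heq : (1 - ρ) ^ t = Real.exp (t * Real.log (1 - ρ)) := by
      rw [← Real.log_pow, Real.exp_log (pow_pos h1ρ' t)]
    rw [heq]
    apply Real.exp_le_exp.mpr
    have : (t : ℝ) * Real.log (1 - ρ) ≤ (t : ℝ) * (-ρ) :=
      mul_le_mul_of_nonneg_left hlog (Nat.cast_nonneg t)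
    linarith
  -- ρ * t ≥ log a
  have hρt : Real.log a ≤ ρ * t := by
    rw [hρinv]
    have : a * Real.log a ≤ t := ht
    rw [div_mul_eq_mul_div, le_div_iff₀ ha0]
    calc Real.log a * a = a * Real.log a := by ring
      _ ≤ 1 * t := by linarith
  have hexp : Real.exp (-(ρ * t)) ≤ 1 / a := by
    rw [show (1:ℝ)/a = a⁻¹ by ring, ← Real.exp_log ha0, ← Real.exp_neg]
    exact Real.exp_le_exp.mpr (by linarith)
  have := main t
  have hfin : m * γ * (1 - ρ) ^ t ≤ δ := by
    have h1 : m * γ * (1 - ρ) ^ t ≤ m * γ * (1 / a) := by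
      have := hpow.trans hexp
      exact mul_le_mul_of_nonneg_left this hmγ.le
    have h2 : m * γ * (1 / a) = δ := by
      rw [hadef]; field_simp
    linarith
  linarith
end
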